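/- arXiv:cs/0503019 — 6 statements merged into one kernel-verified Lean document; each statement's English description precedes it below -/
import Mathlib

section
/- For all real α > 0 and β ≥ 0 with 2β < α, ∫_0^∞ e^{-αx} (I₀(βx))² dx = (2/(πα)) K(2β/α), where K is the complete elliptic integral of the first kind. -/
/-!
Writing `I₀(βx)²` as a double integral over the torus and integrating in `x` first gives
`(2π)⁻² ∬ dθ dφ / (α - β cos θ - β cos φ)`. The `φ`-integral is elementary,
`∫ dφ / (c - β cos φ) = 2π / √(c² - β²)`, which leaves `∫ dθ / √((α - β cos θ)² - β²)`.
The Weierstrass substitution `u = tan (θ/2)` turns the radicand into the product of two quadratics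
`((α - 2β) + αu²)(α + (α + 2β)u²) / (1 + u²)²`, and such an integral over `(0, ∞)` is a multiple of
`K` by the substitution `t = v / √(1 + v²)`, after scaling `u` by `√((α - 2β)/α)`.
-/

open Real MeasureTheory Set

noncomputable def besselI0 (ξ : ℝ) : ℝ :=
  (1 / (2 * π)) * ∫ θ in (-π)..π, Real.exp (ξ * Real.cos θ)

noncomputable def ellipticK (k : ℝ) : ℝ :=
  ∫ t in (0:ℝ)..1, 1 / (Real.sqrt (1 - t ^ 2) * Real.sqrt (1 - k ^ 2 * t ^ 2))

theorem integral_exp_neg_mul_Ioi_zero {c : ℝ} (hc : 0 < c) :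
    ∫ x in Ioi (0 : ℝ), exp (-c * x) = c⁻¹ := by
  simpa [div_neg, neg_div, one_div] using integral_exp_mul_Ioi (neg_lt_zero.mpr hc) 0

theorem integral_Ioi_integral_exp_neg_mul {X : Type*} [MeasurableSpace X] {μ : Measure X}
    [IsFiniteMeasure μ] {c : X → ℝ} (hc : Measurable c) {m : ℝ} (hm : 0 < m)
    (hcm : ∀ p, m ≤ c p) :
    ∫ x in Ioi (0 : ℝ), ∫ p, exp (-c p * x) ∂μ = ∫ p, (c p)⁻¹ ∂μ := by
  have hbound : Integrable (fun z : ℝ × X => exp (-m * z.1)) ((volume.restrict (Ioi 0)).prod μ) :=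
    (exp_neg_integrableOn_Ioi 0 hm).comp_fst μ
  rw [integral_integral_swap]
  · exact integral_congr_ae <| .of_forall fun p =>
      integral_exp_neg_mul_Ioi_zero (hm.trans_le (hcm p))
  refine hbound.mono' (by fun_prop) ?_
  filter_upwards [Measure.quasiMeasurePreserving_fst.ae (ae_restrict_mem measurableSet_Ioi)]
    with z (hz : 0 < z.1)
  rw [Function.uncurry_apply_pair, norm_of_nonneg (exp_pos _).le, exp_le_exp]
  nlinarith [hcm z.2]

theorem cos_two_mul_arctan (u : ℝ) : cos (2 * arctan u) = (1 - u ^ 2) / (1 + u ^ 2) := by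
  have h0 : (0 : ℝ) < 1 + u ^ 2 := by positivity
  rw [cos_two_mul, cos_arctan, div_pow, one_pow, sq_sqrt h0.le]
  field_simp
  ring

theorem range_two_mul_arctan : range (fun u : ℝ => 2 * arctan u) = Ioo (-π) π := by
  ext θ
  constructor
  · rintro ⟨u, rfl⟩
    have h := arctan_mem_Ioo u
    constructor <;> linarith [h.1, h.2]
  · rintro ⟨h1, h2⟩
    refine ⟨tan (θ / 2), show 2 * arctan (tan (θ / 2)) = θ from ?_⟩
    rw [arctan_tan (by linarith) (by linarith)]
    ring

theorem integral_Ioo_neg_pi_pi_comp_cos (g : ℝ → ℝ) :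
    ∫ θ in Ioo (-π) π, g (cos θ) = ∫ u, 2 / (1 + u ^ 2) * g ((1 - u ^ 2) / (1 + u ^ 2)) := by
  have hderiv (u : ℝ) : HasDerivAt (fun u => 2 * arctan u) (2 / (1 + u ^ 2)) u := by
    simpa [div_eq_mul_inv] using (hasDerivAt_arctan u).const_mul 2
  rw [← range_two_mul_arctan, ← image_univ, integral_image_eq_integral_abs_deriv_smul
    MeasurableSet.univ (fun u _ => (hderiv u).hasDerivWithinAt)
    (fun a _ b _ hab => arctan_injective (mul_left_cancel₀ two_ne_zero hab)), Measure.restrict_univ]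
  congr with u
  rw [smul_eq_mul, abs_of_pos (by positivity), cos_two_mul_arctan]

theorem integral_inv_add_mul_sq {p q : ℝ} (hp : 0 < p) (hq : 0 < q) :
    ∫ u, (p + q * u ^ 2)⁻¹ = π / √(p * q) := by
  set d := √(q / p)
  have hd : 0 < d := sqrt_pos.mpr (div_pos hq hp)
  have hpoint (u : ℝ) : (p + q * u ^ 2)⁻¹ = p⁻¹ * (1 + (d * u) ^ 2)⁻¹ := by
    rw [mul_pow, sq_sqrt (div_pos hq hp).le]
    field_simp
  simp_rw [hpoint]
  rw [integral_const_mul, Measure.integral_comp_mul_left (fun y => (1 + y ^ 2)⁻¹),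
    integral_univ_inv_one_add_sq, smul_eq_mul, abs_inv, abs_of_pos hd]
  have hpd : p * d = √(p * q) := by
    rw [show p * q = p ^ 2 * (q / p) by field_simp, sqrt_mul (sq_nonneg p), sqrt_sq hp.le]
  rw [← hpd]
  field_simp

theorem integral_inv_sub_mul_cos {b c : ℝ} (hbc : |b| < c) :
    ∫ θ in Ioo (-π) π, (c - b * cos θ)⁻¹ = 2 * π / √(c ^ 2 - b ^ 2) := by
  obtain ⟨hlt, hgt⟩ := abs_lt.mp hbc
  rw [integral_Ioo_neg_pi_pi_comp_cos (fun y => (c - b * y)⁻¹)]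
  have hpoint (u : ℝ) : 2 / (1 + u ^ 2) * (c - b * ((1 - u ^ 2) / (1 + u ^ 2)))⁻¹
      = 2 * ((c - b) + (c + b) * u ^ 2)⁻¹ := by
    have : 0 < (c - b) + (c + b) * u ^ 2 := by nlinarith [sq_nonneg u]
    field_simp
    ring
  simp_rw [hpoint]
  rw [integral_const_mul, integral_inv_add_mul_sq (by linarith) (by linarith)]
  ring_nf

theorem hasDerivAt_div_sqrt_one_add_sq (v : ℝ) :
    HasDerivAt (fun v => v / √(1 + v ^ 2)) ((1 + v ^ 2) * √(1 + v ^ 2))⁻¹ v := by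
  have hpos : 0 < 1 + v ^ 2 := by positivity
  have hr : 0 < √(1 + v ^ 2) := sqrt_pos.mpr hpos
  have hsqrt : HasDerivAt (fun v => √(1 + v ^ 2)) (v / √(1 + v ^ 2)) v := by
    convert ((hasDerivAt_pow 2 v).const_add 1).sqrt hpos.ne' using 1
    field_simp
    ring
  refine ((hasDerivAt_id' v).div hsqrt hr.ne').congr_deriv ?_
  field_simp
  rw [sq_sqrt hpos.le]
  ring

theorem image_div_sqrt_one_add_sq_Ioi :
    (fun v => v / √(1 + v ^ 2)) '' Ioi 0 = Ioo 0 1 := by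
  ext s
  constructor
  · rintro ⟨v, hv, rfl⟩
    have hr : v < √(1 + v ^ 2) := lt_sqrt_of_sq_lt (by linarith)
    exact ⟨div_pos hv (hv.trans hr), (div_lt_one (hv.trans hr)).mpr hr⟩
  · rintro ⟨hs0, hs1⟩
    have hq : 0 < 1 - s ^ 2 := by nlinarith
    refine ⟨s / √(1 - s ^ 2), div_pos hs0 (sqrt_pos.mpr hq), ?_⟩
    have h1 : 1 + (s / √(1 - s ^ 2)) ^ 2 = (1 / √(1 - s ^ 2)) ^ 2 := by
      rw [div_pow, div_pow, sq_sqrt hq.le]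
      field_simp
      ring
    simp only
    rw [h1, sqrt_sq (by positivity)]
    field_simp

theorem ellipticK_eq_integral_Ioi {k : ℝ} (hk : k ^ 2 ≤ 1) :
    ellipticK k = ∫ v in Ioi 0, (√((1 + v ^ 2) * (1 + (1 - k ^ 2) * v ^ 2)))⁻¹ := by
  have hmono : StrictMono (fun v : ℝ => v / √(1 + v ^ 2)) :=
    strictMono_of_hasDerivAt_pos hasDerivAt_div_sqrt_one_add_sq (fun v => by positivity)
  rw [ellipticK, intervalIntegral.integral_of_le zero_le_one, integral_Ioc_eq_integral_Ioo,
    ← image_div_sqrt_one_add_sq_Ioi, integral_image_eq_integral_abs_deriv_smul measurableSet_Ioi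
      (fun v _ => (hasDerivAt_div_sqrt_one_add_sq v).hasDerivWithinAt) hmono.injective.injOn]
  refine setIntegral_congr_fun measurableSet_Ioi fun v _ => ?_
  have hpos : 0 < 1 + v ^ 2 := by positivity
  have hr : 0 < √(1 + v ^ 2) := sqrt_pos.mpr hpos
  have hr2 : √(1 + v ^ 2) ^ 2 = 1 + v ^ 2 := sq_sqrt hpos.le
  have hk' : 0 ≤ 1 + (1 - k ^ 2) * v ^ 2 := by nlinarith [sq_nonneg v]
  have h1 : 1 - (v / √(1 + v ^ 2)) ^ 2 = (1 / √(1 + v ^ 2)) ^ 2 := by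
    rw [div_pow, div_pow, hr2]
    field_simp
    ring
  have h2 : 1 - k ^ 2 * (v / √(1 + v ^ 2)) ^ 2
      = (1 + (1 - k ^ 2) * v ^ 2) / √(1 + v ^ 2) ^ 2 := by
    rw [div_pow, hr2]
    field_simp
    ring
  rw [h1, h2, sqrt_sq (by positivity), sqrt_div' _ (sq_nonneg _), sqrt_sq hr.le, sqrt_mul hpos.le,
    smul_eq_mul, abs_of_pos (by positivity)]
  field_simp
  rw [hr2]

theorem integral_Ioi_inv_sqrt_mul_eq_ellipticK {a b c d k : ℝ} (ha : 0 < a) (hb : 0 < b)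
    (hc : 0 < c) (hk : k ^ 2 ≤ 1) (hd : a * d = b * c * (1 - k ^ 2)) :
    ∫ u in Ioi 0, (√((a + b * u ^ 2) * (c + d * u ^ 2)))⁻¹ = (√(b * c))⁻¹ * ellipticK k := by
  set C := √(a / b)
  have hC : 0 < C := sqrt_pos.mpr (div_pos ha hb)
  have hC2 : C ^ 2 = a / b := sq_sqrt (div_pos ha hb).le
  have hscale := integral_comp_mul_left_Ioi (fun u => (√((a + b * u ^ 2) * (c + d * u ^ 2)))⁻¹) 0 hC
  rw [mul_zero, eq_inv_smul_iff₀ hC.ne', smul_eq_mul] at hscale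
  rw [← hscale, ellipticK_eq_integral_Ioi hk, ← integral_const_mul, ← integral_const_mul]
  refine setIntegral_congr_fun measurableSet_Ioi fun v _ => ?_
  have hfactor : (a + b * (C * v) ^ 2) * (c + d * (C * v) ^ 2)
      = (a * c) * ((1 + v ^ 2) * (1 + (1 - k ^ 2) * v ^ 2)) := by
    rw [mul_pow, hC2]
    field_simp
    linear_combination v ^ 2 * hd
  have hCval : C = √(a * c) / √(b * c) := by
    rw [← sqrt_div' _ (by positivity), mul_div_mul_right _ _ hc.ne']
  have : 0 < √(a * c) := sqrt_pos.mpr (by positivity)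
  rw [hfactor, sqrt_mul (by positivity), hCval]
  field_simp

local notation "μπ" => volume.restrict (Ioo (-π) π)

theorem mul_cos_le_abs (b θ : ℝ) : b * cos θ ≤ |b| :=
  (le_abs_self _).trans <| by
    rw [abs_mul]; exact mul_le_of_le_one_right (abs_nonneg b) (abs_cos_le_one θ)

theorem sub_two_mul_abs_le_sub_mul_cos_sub_mul_cos (α β : ℝ) (p : ℝ × ℝ) :
    α - 2 * |β| ≤ α - β * cos p.1 - β * cos p.2 := by
  linarith [mul_cos_le_abs β p.1, mul_cos_le_abs β p.2]

theorem besselI0_eq_setIntegral (ξ : ℝ) :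
    besselI0 ξ = (2 * π)⁻¹ * ∫ θ in Ioo (-π) π, exp (ξ * cos θ) := by
  rw [besselI0, one_div, intervalIntegral.integral_of_le (by linarith [pi_pos]),
    integral_Ioc_eq_integral_Ioo]

theorem exp_neg_mul_mul_besselI0_sq (α β x : ℝ) :
    exp (-α * x) * besselI0 (β * x) ^ 2
      = ((2 * π)⁻¹) ^ 2 * ∫ p, exp (-(α - β * cos p.1 - β * cos p.2) * x) ∂((μπ).prod μπ) := by
  have hexp (p : ℝ × ℝ) : exp (-(α - β * cos p.1 - β * cos p.2) * x)
      = exp (-α * x) * (exp (β * x * cos p.1) * exp (β * x * cos p.2)) := by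
    rw [← exp_add, ← exp_add]
    ring_nf
  rw [integral_congr_ae (.of_forall hexp), integral_const_mul,
    integral_prod_mul (fun θ => exp (β * x * cos θ)) (fun θ => exp (β * x * cos θ)),
    besselI0_eq_setIntegral]
  ring

theorem integral_prod_inv_sub_mul_cos_sub_mul_cos {α β : ℝ} (h : 2 * |β| < α) :
    ∫ p, (α - β * cos p.1 - β * cos p.2)⁻¹ ∂((μπ).prod μπ)
      = 2 * π * ∫ θ in Ioo (-π) π, (√((α - β * cos θ) ^ 2 - β ^ 2))⁻¹ := by
  have hpos := sub_two_mul_abs_le_sub_mul_cos_sub_mul_cos α β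
  have hint :
      Integrable (fun p : ℝ × ℝ => (α - β * cos p.1 - β * cos p.2)⁻¹) ((μπ).prod μπ) := by
    refine .of_bound (by fun_prop) (α - 2 * |β|)⁻¹ (.of_forall fun p => ?_)
    rw [norm_inv, norm_of_nonneg (by linarith [hpos p])]
    exact inv_anti₀ (by linarith) (hpos p)
  rw [integral_prod _ hint, ← integral_const_mul]
  refine integral_congr_ae (.of_forall fun θ => ?_)
  have hθ : |β| < α - β * cos θ := by linarith [mul_cos_le_abs β θ]
  dsimp only
  rw [integral_inv_sub_mul_cos hθ, div_eq_mul_inv]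

theorem integral_inv_sqrt_sub_mul_cos_sq_sub_sq {α β : ℝ} (h : 2 * |β| < α) :
    ∫ θ in Ioo (-π) π, (√((α - β * cos θ) ^ 2 - β ^ 2))⁻¹ = 4 / α * ellipticK (2 * β / α) := by
  obtain ⟨hβl, hβr⟩ := abs_lt.mp (show |2 * β| < α by rwa [abs_mul, abs_two])
  have hα : 0 < α := by linarith
  set P : ℝ → ℝ := fun u => (α - 2 * β + α * u ^ 2) * (α + (α + 2 * β) * u ^ 2)
  -- stated through `|u|` so that `integral_comp_abs` folds the even integrand onto `(0, ∞)`
  have hpoint (u : ℝ) :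
      2 / (1 + u ^ 2) * (√((α - β * ((1 - u ^ 2) / (1 + u ^ 2))) ^ 2 - β ^ 2))⁻¹
        = 2 * (√(P |u|))⁻¹ := by
    have h1 : 0 < 1 + u ^ 2 := by positivity
    have hP : (α - β * ((1 - u ^ 2) / (1 + u ^ 2))) ^ 2 - β ^ 2 = P |u| / (1 + u ^ 2) ^ 2 := by
      simp only [P, sq_abs]
      field_simp
      ring
    rw [hP, sqrt_div' _ (sq_nonneg _), sqrt_sq h1.le]
    have : 0 < √(P |u|) := sqrt_pos.mpr (mul_pos (by nlinarith [sq_nonneg |u|])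
      (by nlinarith [sq_nonneg |u|]))
    field_simp
  have hk : (2 * β / α) ^ 2 ≤ 1 := by
    rw [div_pow, div_le_one (by positivity)]
    nlinarith
  rw [integral_Ioo_neg_pi_pi_comp_cos (fun y => (√((α - β * y) ^ 2 - β ^ 2))⁻¹)]
  simp_rw [hpoint]
  rw [integral_const_mul, integral_comp_abs (f := fun u => (√(P u))⁻¹),
    integral_Ioi_inv_sqrt_mul_eq_ellipticK (by linarith) hα hα hk (by field_simp; ring),
    sqrt_mul_self hα.le]
  ring

theorem laplace_integral_besselI0_sq_general (α β : ℝ) (hβ : 0 ≤ β)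
    (h : 2 * β < α) :
    ∫ x in Set.Ioi (0:ℝ), Real.exp (-α * x) * (besselI0 (β * x)) ^ 2
      = (2 / (π * α)) * ellipticK (2 * β / α) := by
  have hβα : 2 * |β| < α := by rwa [abs_of_nonneg hβ]
  simp_rw [exp_neg_mul_mul_besselI0_sq]
  rw [integral_const_mul, integral_Ioi_integral_exp_neg_mul (by fun_prop) (by linarith)
      (sub_two_mul_abs_le_sub_mul_cos_sub_mul_cos α β),
    integral_prod_inv_sub_mul_cos_sub_mul_cos hβα, integral_inv_sqrt_sub_mul_cos_sq_sub_sq hβα]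
  field_simp
  ring

theorem laplace_integral_besselI0_sq (α β : ℝ) (hα : 0 < α) (hβ : 0 ≤ β)
    (h : 2 * β < α) :
    ∫ x in Set.Ioi (0:ℝ), Real.exp (-α * x) * (besselI0 (β * x)) ^ 2
      = (2 / (π * α)) * ellipticK (2 * β / α) :=
  laplace_integral_besselI0_sq_general α β hβ h
end

section
/- For real k, k' with 0 < k < 1, 0 < k' < 1, and k² + k'² = 1, the complete elliptic integral of the first kind satisfies the Landen-type identity K(k) = (2/(1+k')) · K((1-k')/(1+k')). -/
open Real MeasureTheory

/-!
The Gauss–Landen substitution `t = (1 + l) s / (1 + l s²)` increases from `0` to `1` on `[0, 1]`,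
and when `k² (1 + l)² = 4 l` it factors both radicals of the integrand:
`1 - t² = (1 - s²)(1 - l² s²) / (1 + l s²)²` and `1 - k² t² = ((1 - l s²) / (1 + l s²))²`.
Together with `dt/ds = (1 + l)(1 - l s²) / (1 + l s²)²` this turns the integrand of `K(k)` into
`1 + l` times that of `K(l)`, so `K(k) = (1 + l) K(l)`. For `l = (1 - k') / (1 + k')` one has
`1 + l = 2 / (1 + k')`, and `k² (1 + l)² = 4 l` follows from `k² + k'² = 1`.
The change of variables for a monotone map needs no integrability hypothesis, so the
singularity of the integrands at `1` needs no limiting argument.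
-/

open Set

noncomputable def ellipticKIntegrand (k t : ℝ) : ℝ :=
  1 / (√(1 - t ^ 2) * √(1 - k ^ 2 * t ^ 2))

theorem ellipticK_eq_setIntegral_Icc (k : ℝ) :
    ellipticK k = ∫ t in Icc 0 1, ellipticKIntegrand k t := by
  rw [ellipticK, intervalIntegral.integral_of_le zero_le_one, integral_Icc_eq_integral_Ioc]
  rfl

noncomputable def landenMap (l s : ℝ) : ℝ := (1 + l) * s / (1 + l * s ^ 2)

section landenMap

variable {k l : ℝ}

theorem landenMap_zero (l : ℝ) : landenMap l 0 = 0 := by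
  simp [landenMap]

theorem landenMap_one (hl : 0 ≤ l) : landenMap l 1 = 1 := by
  rw [landenMap, one_pow, mul_one, mul_one, div_self (by positivity)]

theorem continuous_landenMap (hl : 0 ≤ l) : Continuous (landenMap l) :=
  continuous_iff_continuousAt.2 fun s ↦
    ContinuousAt.div (by fun_prop) (by fun_prop) (by positivity)

theorem hasDerivAt_landenMap (hl : 0 ≤ l) (s : ℝ) :
    HasDerivAt (landenMap l) ((1 + l) * (1 - l * s ^ 2) / (1 + l * s ^ 2) ^ 2) s := by
  have hnum : HasDerivAt (fun x ↦ (1 + l) * x) (1 + l) s := by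
    simpa using (hasDerivAt_id s).const_mul (1 + l)
  have hden : HasDerivAt (fun x ↦ 1 + l * x ^ 2) (l * (2 * s)) s := by
    simpa using ((hasDerivAt_pow 2 s).const_mul l).const_add 1
  exact (hnum.div hden (by positivity)).congr_deriv (by ring)

theorem one_sub_landenMap_sq (hl : 0 ≤ l) (s : ℝ) :
    1 - landenMap l s ^ 2 = (1 - s ^ 2) * (1 - l ^ 2 * s ^ 2) / (1 + l * s ^ 2) ^ 2 := by
  have : 1 + l * s ^ 2 ≠ 0 := by positivity
  rw [landenMap]
  field_simp
  ring

theorem one_sub_mul_landenMap_sq (hl : 0 ≤ l) (hkl : k ^ 2 * (1 + l) ^ 2 = 4 * l) (s : ℝ) :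
    1 - k ^ 2 * landenMap l s ^ 2 = ((1 - l * s ^ 2) / (1 + l * s ^ 2)) ^ 2 := by
  have : 1 + l * s ^ 2 ≠ 0 := by positivity
  rw [landenMap]
  field_simp
  linear_combination (-s ^ 2) * hkl

theorem deriv_landenMap_mul_ellipticKIntegrand (hl : 0 ≤ l) (hl1 : l ≤ 1)
    (hkl : k ^ 2 * (1 + l) ^ 2 = 4 * l) {s : ℝ} (hs : s ^ 2 < 1) :
    (1 + l) * (1 - l * s ^ 2) / (1 + l * s ^ 2) ^ 2 * ellipticKIntegrand k (landenMap l s)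
      = (1 + l) * ellipticKIntegrand l s := by
  have hD : 0 < 1 + l * s ^ 2 := by positivity
  have hls : 0 < 1 - l * s ^ 2 := by nlinarith
  have hs' : 0 < 1 - s ^ 2 := by linarith
  have hl2s : 0 < 1 - l ^ 2 * s ^ 2 := by nlinarith
  have e1 : √(1 - landenMap l s ^ 2) = √(1 - s ^ 2) * √(1 - l ^ 2 * s ^ 2) / (1 + l * s ^ 2) := by
    rw [one_sub_landenMap_sq hl, sqrt_div' _ (by positivity), sqrt_mul hs'.le, sqrt_sq hD.le]
  have e2 : √(1 - k ^ 2 * landenMap l s ^ 2) = (1 - l * s ^ 2) / (1 + l * s ^ 2) := by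
    rw [one_sub_mul_landenMap_sq hl hkl, sqrt_sq (by positivity)]
  have : 0 < √(1 - s ^ 2) := sqrt_pos.2 hs'
  have : 0 < √(1 - l ^ 2 * s ^ 2) := sqrt_pos.2 hl2s
  rw [ellipticKIntegrand, ellipticKIntegrand, e1, e2]
  field_simp

theorem ellipticK_eq_one_add_mul_ellipticK (hl : 0 ≤ l) (hl1 : l ≤ 1)
    (hkl : k ^ 2 * (1 + l) ^ 2 = 4 * l) :
    ellipticK k = (1 + l) * ellipticK l := by
  have hsq {s : ℝ} (hs : s ∈ Ioo (0 : ℝ) 1) : s ^ 2 < 1 := by nlinarith [hs.1, hs.2]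
  have hsubst := integral_Icc_deriv_smul_of_deriv_nonneg (g := ellipticKIntegrand k)
    (continuous_landenMap hl).continuousOn (fun s _ ↦ hasDerivAt_landenMap hl s)
    (fun s hs ↦ div_nonneg (mul_nonneg (by linarith) (by nlinarith [hsq hs])) (by positivity))
    zero_le_one
  rw [landenMap_zero, landenMap_one hl] at hsubst
  rw [ellipticK_eq_setIntegral_Icc, ellipticK_eq_setIntegral_Icc, ← hsubst,
    ← integral_const_mul, integral_Icc_eq_integral_Ioo, integral_Icc_eq_integral_Ioo]
  exact setIntegral_congr_fun measurableSet_Ioo fun s hs ↦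
    deriv_landenMap_mul_ellipticKIntegrand hl hl1 hkl (hsq hs)

end landenMap

theorem ellipticK_landen_general (k k' : ℝ)
    (hk' : 0 < k') (hk'1 : k' < 1) (h : k ^ 2 + k' ^ 2 = 1) :
    ellipticK k = (2 / (1 + k')) * ellipticK ((1 - k') / (1 + k')) := by
  have hpos : 0 < 1 + k' := by linarith
  have hl : 0 ≤ (1 - k') / (1 + k') := div_nonneg (by linarith) hpos.le
  have hl1 : (1 - k') / (1 + k') ≤ 1 := (div_le_one hpos).2 (by linarith)
  have hsum : 1 + (1 - k') / (1 + k') = 2 / (1 + k') := by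
    field_simp
    ring
  have hkl : k ^ 2 * (1 + (1 - k') / (1 + k')) ^ 2 = 4 * ((1 - k') / (1 + k')) := by
    have hk : k ^ 2 = (1 - k') * (1 + k') := by linear_combination h
    rw [hsum, hk]
    field_simp
    ring
  rw [ellipticK_eq_one_add_mul_ellipticK hl hl1 hkl, hsum]

theorem ellipticK_landen (k k' : ℝ) (hk : 0 < k) (hk1 : k < 1)
    (hk' : 0 < k') (hk'1 : k' < 1) (h : k ^ 2 + k' ^ 2 = 1) :
    ellipticK k = (2 / (1 + k')) * ellipticK ((1 - k') / (1 + k')) :=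
  ellipticK_landen_general k k' hk' hk'1 h
end

section
/- The function ξ ↦ ξ - 2 log I₀(ξ/2) is monotonically increasing on [0, ∞). -/
open Real MeasureTheory

lemma besselI0_integrable (ξ : ℝ) :
    IntervalIntegrable (fun θ => Real.exp (ξ * Real.cos θ)) volume (-π) π :=
  (Real.continuous_exp.comp (continuous_const.mul Real.continuous_cos)).intervalIntegrable _ _

lemma besselI0_pos (ξ : ℝ) : 0 < besselI0 ξ := by
  have hπ : (0:ℝ) < π := Real.pi_pos
  have h1 : (0:ℝ) < 1 / (2 * π) := by positivity
  refine mul_pos h1 ?_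
  refine intervalIntegral.intervalIntegral_pos_of_pos (f := fun θ => Real.exp (ξ * Real.cos θ))
    (besselI0_integrable ξ) ?_ (by linarith)
  intro x
  exact Real.exp_pos _

lemma besselI0_le (a b : ℝ) (hab : a ≤ b) :
    besselI0 b ≤ Real.exp (b - a) * besselI0 a := by
  have hπ : (0:ℝ) < π := Real.pi_pos
  have h1 : (0:ℝ) ≤ 1 / (2 * π) := by positivity
  have hint : ∫ θ in (-π)..π, Real.exp (b * Real.cos θ) ≤
      ∫ θ in (-π)..π, Real.exp (b - a) * Real.exp (a * Real.cos θ) := by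
    refine intervalIntegral.integral_mono_on (by linarith) (besselI0_integrable b)
      ((besselI0_integrable a).const_mul _) ?_
    intro x _
    rw [← Real.exp_add]
    apply Real.exp_le_exp.mpr
    nlinarith [Real.neg_one_le_cos x, Real.cos_le_one x]
  rw [intervalIntegral.integral_const_mul] at hint
  unfold besselI0
  calc 1 / (2 * π) * ∫ θ in (-π)..π, Real.exp (b * Real.cos θ)
      ≤ 1 / (2 * π) * (Real.exp (b - a) * ∫ θ in (-π)..π, Real.exp (a * Real.cos θ)) :=
        mul_le_mul_of_nonneg_left hint h1
    _ = Real.exp (b - a) * (1 / (2 * π) * ∫ θ in (-π)..π, Real.exp (a * Real.cos θ)) := by ring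

theorem monotone_sub_two_log_besselI0 :
    MonotoneOn (fun ξ : ℝ => ξ - 2 * Real.log (besselI0 (ξ / 2))) (Set.Ici 0) := by
  intro a _ b _ hab
  simp only
  have hkey := besselI0_le (a / 2) (b / 2) (by linarith)
  have hlog : Real.log (besselI0 (b / 2)) ≤ (b / 2 - a / 2) + Real.log (besselI0 (a / 2)) := by
    calc Real.log (besselI0 (b / 2))
        ≤ Real.log (Real.exp (b / 2 - a / 2) * besselI0 (a / 2)) :=
          Real.log_le_log (besselI0_pos _) hkey
      _ = (b / 2 - a / 2) + Real.log (besselI0 (a / 2)) := by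
          rw [Real.log_mul (Real.exp_ne_zero _) (besselI0_pos _).ne', Real.log_exp]
  linarith
end

section
/- Fix d ∈ ℂ, σ > 0. For the Ricean fading channel with conditional output density w(y|x) (density of Hx + Z where H ~ 𝒩_ℂ(d,1), Z ~ 𝒩_ℂ(0,σ²) independent), the Bhattacharyya coefficient satisfies ∫_ℂ √(w(y|x)·w(y|x')) dμ(y) = (2√(|x|²+σ²)·√(|x'|²+σ²))/(|x|²+|x'|²+2σ²) · exp(-|d|²·|x-x'|²/(2(|x|²+|x'|²+2σ²))) for all x, x' ∈ ℂ. -/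
open Real Complex MeasureTheory

/-- Conditional output density of the Ricean fading channel:
`Y = H x + Z` with `H ~ 𝒩_ℂ(d,1)`, `Z ~ 𝒩_ℂ(0,σ²)`. -/
noncomputable def riceDensity (d : ℂ) (σ : ℝ) (x y : ℂ) : ℝ :=
  (1 / (π * (‖x‖ ^ 2 + σ ^ 2)))
    * Real.exp (-(‖y - d * x‖) ^ 2 / (‖x‖ ^ 2 + σ ^ 2))

/-!
Given `x`, the output is circularly symmetric Gaussian with mean `d x` and variance
`a = ‖x‖² + σ²`. Completing the square, the product of the densities `𝒩_ℂ(m, a)` and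
`𝒩_ℂ(m', b)` is `exp (-‖m - m'‖² / (a + b)) / (π² a b)` times a Gaussian in `y` centred at
`(b m + a m') / (a + b)` with precision `(a + b) / (a b)`. Its square root is again of this
form with half the exponents, and `∫ exp (-k ‖y - c‖²) = π / k` evaluates the integral.
-/

noncomputable def circularGaussianPDF (m : ℂ) (v : ℝ) (y : ℂ) : ℝ :=
  1 / (π * v) * Real.exp (-‖y - m‖ ^ 2 / v)

theorem integral_exp_neg_mul_norm_sub_sq {k : ℝ} (hk : 0 < k) (c : ℂ) :
    ∫ y : ℂ, Real.exp (-k * ‖y - c‖ ^ 2) = π / k := by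
  rw [integral_sub_right_eq_self (fun y : ℂ => Real.exp (-k * ‖y‖ ^ 2)) c,
    GaussianFourier.integral_rexp_neg_mul_sq_norm hk, Complex.finrank_real_complex]
  norm_num

theorem norm_sub_sq_div_add_norm_sub_sq_div {a b : ℝ} (ha : 0 < a) (hb : 0 < b) (y m m' : ℂ) :
    ‖y - m‖ ^ 2 / a + ‖y - m'‖ ^ 2 / b
      = (a + b) / (a * b) * ‖y - (b * m + a * m') / (a + b)‖ ^ 2
        + ‖m - m'‖ ^ 2 / (a + b) := by
  have hab : (a : ℂ) + b ≠ 0 := by norm_cast; positivity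
  simp only [Complex.sq_norm, Complex.normSq_apply, Complex.sub_re, Complex.sub_im,
    Complex.div_re, Complex.div_im, Complex.add_re, Complex.add_im, Complex.mul_re,
    Complex.mul_im, Complex.ofReal_re, Complex.ofReal_im]
  field_simp
  ring

theorem sqrt_circularGaussianPDF_mul {a b : ℝ} (ha : 0 < a) (hb : 0 < b) (m m' y : ℂ) :
    √(circularGaussianPDF m a y * circularGaussianPDF m' b y)
      = (π * √a * √b)⁻¹ * Real.exp (-‖m - m'‖ ^ 2 / (2 * (a + b)))
        * Real.exp (-((a + b) / (2 * (a * b))) * ‖y - (b * m + a * m') / (a + b)‖ ^ 2) := by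
  have hexp : Real.exp (-‖y - m‖ ^ 2 / a) * Real.exp (-‖y - m'‖ ^ 2 / b)
      = Real.exp (-‖m - m'‖ ^ 2 / (2 * (a + b))) ^ 2
        * Real.exp (-((a + b) / (2 * (a * b))) * ‖y - (b * m + a * m') / (a + b)‖ ^ 2) ^ 2 := by
    rw [← Real.exp_add, ← Real.exp_nat_mul, ← Real.exp_nat_mul, ← Real.exp_add,
      neg_div, neg_div, ← neg_add, norm_sub_sq_div_add_norm_sub_sq_div ha hb]
    congr 1
    field_simp
    ring
  rw [Real.sqrt_eq_iff_mul_self_eq_of_pos (by positivity), ← sq, mul_pow, mul_pow,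
    mul_assoc _ (_ ^ 2), ← hexp, inv_pow, mul_pow, mul_pow, Real.sq_sqrt ha.le,
    Real.sq_sqrt hb.le, circularGaussianPDF, circularGaussianPDF]
  field_simp

theorem integral_sqrt_circularGaussianPDF_mul {a b : ℝ} (ha : 0 < a) (hb : 0 < b) (m m' : ℂ) :
    ∫ y : ℂ, √(circularGaussianPDF m a y * circularGaussianPDF m' b y)
      = 2 * √a * √b / (a + b) * Real.exp (-‖m - m'‖ ^ 2 / (2 * (a + b))) := by
  simp_rw [sqrt_circularGaussianPDF_mul ha hb, integral_const_mul]
  rw [integral_exp_neg_mul_norm_sub_sq (by positivity)]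
  have : 0 < √a := Real.sqrt_pos.2 ha
  have : 0 < √b := Real.sqrt_pos.2 hb
  field_simp
  rw [Real.sq_sqrt ha.le, Real.sq_sqrt hb.le]

theorem rice_bhattacharyya (d : ℂ) (σ : ℝ) (hσ : 0 < σ) (x x' : ℂ) :
    ∫ y : ℂ, Real.sqrt (riceDensity d σ x y * riceDensity d σ x' y)
      = (2 * Real.sqrt (‖x‖ ^ 2 + σ ^ 2)
            * Real.sqrt (‖x'‖ ^ 2 + σ ^ 2))
          / (‖x‖ ^ 2 + ‖x'‖ ^ 2 + 2 * σ ^ 2)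
        * Real.exp (-(‖d‖) ^ 2 * (‖x - x'‖) ^ 2
            / (2 * (‖x‖ ^ 2 + ‖x'‖ ^ 2 + 2 * σ ^ 2))) := by
  have hvar : ∀ z : ℂ, 0 < ‖z‖ ^ 2 + σ ^ 2 := fun z => by positivity
  change ∫ y : ℂ, √(circularGaussianPDF (d * x) _ y * circularGaussianPDF (d * x') _ y) = _
  rw [integral_sqrt_circularGaussianPDF_mul (hvar x) (hvar x'), ← mul_sub, norm_mul, mul_pow]
  ring_nf
end

section
/- Let X, Y be finite sets, W a channel from X to Y, ρ > 0, and g : X → ℝ a cost function, Υ ∈ ℝ. Suppose Q* is a pmf on X with E_{Q*}[g] = Υ and r* ≥ 0 are such that, defining α(y) = ∑_x Q*(x) e^{r*(g(x)-Υ)} W(y|x)^{1/(1+ρ)}, the Kuhn–Tucker condition ∑_y α(y)^ρ e^{r*(g(x)-Υ)} W(y|x)^{1/(1+ρ)} ≥ ∑_y α(y)^{1+ρ} holds for all x ∈ X. Then for every pmf Q on X with E_Q[g] = Υ and every pmf R on Y given by R(y) = α(y)^{1+ρ}/∑_{y'} α(y')^{1+ρ}, one has -(1+ρ)∑_x Q(x)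 log(∑_y W(y|x)^{1/(1+ρ)} R(y)^{ρ/(1+ρ)}) ≤ -log ∑_y α(y)^{1+ρ}. -/
open Real BigOperators

theorem ck_le_gallager_cost_modified
    {X Y : Type*} [Fintype X] [Fintype Y]
    (W : X → Y → ℝ) (hW0 : ∀ x y, 0 ≤ W x y) (hW1 : ∀ x, ∑ y, W x y = 1)
    (ρ : ℝ) (hρ : 0 < ρ) (g : X → ℝ) (Υ : ℝ)
    (Qs : X → ℝ) (hQs0 : ∀ x, 0 ≤ Qs x) (hQs1 : ∑ x, Qs x = 1)
    (hQscost : ∑ x, Qs x * g x = Υ)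
    (rs : ℝ) (hrs : 0 ≤ rs)
    (α : Y → ℝ)
    (hα : ∀ y, α y = ∑ x, Qs x * Real.exp (rs * (g x - Υ)) * (W x y) ^ (1 / (1 + ρ)))
    (hαpos : ∀ y, 0 < α y)
    (hKT : ∀ x, ∑ y, (α y) ^ ρ * Real.exp (rs * (g x - Υ)) * (W x y) ^ (1 / (1 + ρ))
        ≥ ∑ y, (α y) ^ (1 + ρ))
    (Q : X → ℝ) (hQ0 : ∀ x, 0 ≤ Q x) (hQ1 : ∑ x, Q x = 1)
    (hQcost : ∑ x, Q x * g x = Υ)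
    (R : Y → ℝ)
    (hR : ∀ y, R y = (α y) ^ (1 + ρ) / ∑ y', (α y') ^ (1 + ρ)) :
    -(1 + ρ) * ∑ x, Q x *
        Real.log (∑ y, (W x y) ^ (1 / (1 + ρ)) * (R y) ^ (ρ / (1 + ρ)))
      ≤ - Real.log (∑ y, (α y) ^ (1 + ρ)) := by
  rcases isEmpty_or_nonempty Y with hY | hY
  · simp [Finset.univ_eq_empty]
  · have h1ρ : (0:ℝ) < 1 + ρ := by linarith
    set A := ∑ y, α y ^ (1 + ρ) with hA
    have hApos : 0 < A :=
      Finset.sum_pos (fun y _ => Real.rpow_pos_of_pos (hαpos y) _) Finset.univ_nonempty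
    have hd : (1 + ρ) * (ρ / (1 + ρ)) = ρ := by field_simp
    have key : ∀ x, (1/(1+ρ)) * Real.log A - rs * (g x - Υ)
        ≤ Real.log (∑ y, (W x y) ^ (1 / (1 + ρ)) * (R y) ^ (ρ / (1 + ρ))) := by
      intro x
      have hSx : (∑ y, (W x y) ^ (1 / (1 + ρ)) * (R y) ^ (ρ / (1 + ρ)))
          = (∑ y, α y ^ ρ * (W x y) ^ (1 / (1 + ρ))) / A ^ (ρ / (1 + ρ)) := by
        rw [Finset.sum_div]
        refine Finset.sum_congr rfl fun y _ => ?_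
        rw [hR y, Real.div_rpow (Real.rpow_nonneg (hαpos y).le _) hApos.le,
          ← Real.rpow_mul (hαpos y).le, hd]
        ring
      set T := ∑ y, α y ^ ρ * (W x y) ^ (1 / (1 + ρ)) with hT
      have hKTx := hKT x
      have h1 : (∑ y, α y ^ ρ * Real.exp (rs * (g x - Υ)) * (W x y) ^ (1 / (1 + ρ)))
          = Real.exp (rs * (g x - Υ)) * T := by
        rw [Finset.mul_sum]
        exact Finset.sum_congr rfl fun y _ => by ring
      have h2 : A ≤ Real.exp (rs * (g x - Υ)) * T := by rw [← h1]; exact hKTx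
      have hTlb : A * Real.exp (-(rs * (g x - Υ))) ≤ T := by
        have h3 : A * Real.exp (-(rs * (g x - Υ)))
            ≤ (Real.exp (rs * (g x - Υ)) * T) * Real.exp (-(rs * (g x - Υ))) :=
          mul_le_mul_of_nonneg_right h2 (Real.exp_pos _).le
        calc A * Real.exp (-(rs * (g x - Υ)))
            ≤ (Real.exp (rs * (g x - Υ)) * T) * Real.exp (-(rs * (g x - Υ))) := h3
          _ = T * (Real.exp (rs * (g x - Υ)) * Real.exp (-(rs * (g x - Υ)))) := by ring
          _ = T := by rw [← Real.exp_add]; simp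
      have hTpos : 0 < T := lt_of_lt_of_le (by positivity) hTlb
      have hlogT : Real.log A - rs * (g x - Υ) ≤ Real.log T := by
        have : Real.log (A * Real.exp (-(rs * (g x - Υ)))) ≤ Real.log T :=
          Real.log_le_log (by positivity) hTlb
        rwa [Real.log_mul hApos.ne' (Real.exp_ne_zero _), Real.log_exp] at this
      rw [hSx, Real.log_div hTpos.ne' (Real.rpow_pos_of_pos hApos _).ne',
        Real.log_rpow hApos]
      have h3 : 1/(1+ρ) * Real.log A = Real.log A - ρ/(1+ρ) * Real.log A := by
        field_simp
        ring
      linarith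
    have sum_le : ∑ x, Q x * ((1/(1+ρ)) * Real.log A - rs * (g x - Υ))
        ≤ ∑ x, Q x * Real.log (∑ y, (W x y) ^ (1 / (1 + ρ)) * (R y) ^ (ρ / (1 + ρ))) :=
      Finset.sum_le_sum fun x _ => mul_le_mul_of_nonneg_left (key x) (hQ0 x)
    have lhs_eq : ∑ x, Q x * ((1/(1+ρ)) * Real.log A - rs * (g x - Υ))
        = (1/(1+ρ)) * Real.log A := by
      have h4 : ∀ x, Q x * ((1/(1+ρ)) * Real.log A - rs * (g x - Υ))
          = (1/(1+ρ)) * Real.log A * Q x - rs * (Q x * g x) + rs * Υ * Q x :=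
        fun x => by ring
      simp_rw [h4]
      rw [Finset.sum_add_distrib, Finset.sum_sub_distrib, ← Finset.mul_sum,
        ← Finset.mul_sum, ← Finset.mul_sum, hQ1, hQcost]
      ring
    rw [lhs_eq] at sum_le
    have hmul : (1+ρ) * ((1/(1+ρ)) * Real.log A) ≤ (1+ρ) *
        ∑ x, Q x * Real.log (∑ y, (W x y) ^ (1 / (1 + ρ)) * (R y) ^ (ρ / (1 + ρ))) :=
      mul_le_mul_of_nonneg_left sum_le h1ρ.le
    have hone : (1+ρ) * ((1/(1+ρ)) * Real.log A) = Real.log A := by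
      field_simp
    rw [hone] at hmul
    linarith
end

section
/- Let X, Y be finite sets with |X| = N, |Y| = M, let w ∈ ℝ^{N×M} have nonnegative entries, and ρ > 0. Then min over probability vectors q ∈ ℝ^N of ∑_j (∑_i q_i w_{ij})^{1+ρ} equals max over probability vectors r ∈ ℝ^M of (min_i ∑_j w_{ij} r_j^{ρ/(1+ρ)})^{1+ρ}. -/
/-!
Weak duality is averaging the row sums `∑ⱼ wᵢⱼ rⱼ^(ρ/(1+ρ))` against `q`, followed by Hölder's
inequality with exponents `1 + ρ` and `(1 + ρ)/ρ`. For strong duality let `q` minimise the primal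
objective on the simplex and `a = q ᵥ* w`. Moving `q` towards a vertex `eᵢ` cannot decrease the
objective, so its one-sided derivative gives `∑ⱼ aⱼ^(1+ρ) ≤ ∑ⱼ wᵢⱼ aⱼ^ρ` for every `i`; hence
`r ∝ a^(1+ρ)` makes the dual objective at least the primal minimum.
-/

open Real BigOperators Finset Matrix Set

-- For `w i j = W(y_j | x_i) ^ (1 / (1 + ρ))` this is `exp (-E₀(ρ, q))`, Gallager's function.
noncomputable def gallagerObjective {ι κ : Type*} [Fintype ι] [Fintype κ]
    (w : Matrix ι κ ℝ) (ρ : ℝ) (q : ι → ℝ) : ℝ :=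
  ∑ j, (q ᵥ* w) j ^ (1 + ρ)

noncomputable def ckObjective {ι κ : Type*} [Fintype κ]
    (w : Matrix ι κ ℝ) (ρ : ℝ) (r : κ → ℝ) : ℝ :=
  (⨅ i, ∑ j, w i j * r j ^ (ρ / (1 + ρ))) ^ (1 + ρ)

theorem ciInf_le_sum_mul_of_mem_stdSimplex {ι : Type*} [Fintype ι] (f : ι → ℝ) {q : ι → ℝ}
    (hq : q ∈ stdSimplex ℝ ι) :
    ⨅ i, f i ≤ ∑ i, q i * f i :=
  calc ⨅ i, f i = ∑ i, q i * ⨅ i, f i := by rw [← sum_mul, hq.2, one_mul]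
    _ ≤ ∑ i, q i * f i := sum_le_sum fun i _ =>
      mul_le_mul_of_nonneg_left (ciInf_le (finite_range f).bddBelow i) (hq.1 i)

theorem sum_mul_rpow_le_of_mem_stdSimplex {κ : Type*} [Fintype κ] {a r : κ → ℝ}
    (ha : ∀ j, 0 ≤ a j) (hr : r ∈ stdSimplex ℝ κ) {ρ : ℝ} (hρ : 0 < ρ) :
    (∑ j, a j * r j ^ (ρ / (1 + ρ))) ^ (1 + ρ) ≤ ∑ j, a j ^ (1 + ρ) := by
  have hpq : (1 + ρ).HolderConjugate ((1 + ρ) / ρ) :=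
    Real.holderConjugate_iff.mpr ⟨by linarith, by field_simp⟩
  have hr' : ∀ j, (r j ^ (ρ / (1 + ρ))) ^ ((1 + ρ) / ρ) = r j := fun j => by
    rw [← rpow_mul (hr.1 j), div_mul_div_cancel₀' hρ.ne', div_self (by linarith), rpow_one]
  have holder := inner_le_Lp_mul_Lq_of_nonneg univ hpq (fun j _ => ha j)
    (fun j _ => rpow_nonneg (hr.1 j) (ρ / (1 + ρ)))
  rw [funext hr', hr.2, one_rpow, mul_one, one_div] at holder
  calc (∑ j, a j * r j ^ (ρ / (1 + ρ))) ^ (1 + ρ)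
      ≤ ((∑ j, a j ^ (1 + ρ)) ^ (1 + ρ)⁻¹) ^ (1 + ρ) :=
        rpow_le_rpow (sum_nonneg fun j _ => mul_nonneg (ha j) (rpow_nonneg (hr.1 j) _))
          holder (by linarith)
    _ = ∑ j, a j ^ (1 + ρ) :=
        rpow_inv_rpow (sum_nonneg fun j _ => rpow_nonneg (ha j) _) (by linarith)

theorem vecMul_nonneg_of_mem_stdSimplex {ι κ : Type*} [Fintype ι] {w : Matrix ι κ ℝ}
    (hw : ∀ i j, 0 ≤ w i j) {q : ι → ℝ} (hq : q ∈ stdSimplex ℝ ι) (j : κ) : 0 ≤ (q ᵥ* w) j :=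
  sum_nonneg fun i _ => mul_nonneg (hq.1 i) (hw i j)

theorem HasDerivAt.nonneg_of_isMinOn_Icc {φ : ℝ → ℝ} {φ' : ℝ} (hφ : HasDerivAt φ φ' 0)
    (hmin : IsMinOn φ (Icc 0 1) 0) : 0 ≤ φ' := by
  have hy : (1 : ℝ) ∈ posTangentConeAt (Icc 0 1) 0 :=
    mem_posTangentConeAt_of_segment_subset (by rw [zero_add, segment_eq_Icc zero_le_one])
  simpa using hmin.localize.hasFDerivWithinAt_nonneg hφ.hasFDerivAt.hasFDerivWithinAt hy

section

variable {ι κ : Type*} [Fintype ι] [Fintype κ]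

theorem ckObjective_le_gallagerObjective {w : Matrix ι κ ℝ} (hw : ∀ i j, 0 ≤ w i j) {ρ : ℝ}
    (hρ : 0 < ρ) {q : ι → ℝ} (hq : q ∈ stdSimplex ℝ ι) {r : κ → ℝ} (hr : r ∈ stdSimplex ℝ κ) :
    ckObjective w ρ r ≤ gallagerObjective w ρ q := by
  set x : κ → ℝ := fun j => r j ^ (ρ / (1 + ρ))
  have hx : ∀ j, 0 ≤ x j := fun j => rpow_nonneg (hr.1 j) _
  calc ckObjective w ρ r = (⨅ i, (w *ᵥ x) i) ^ (1 + ρ) := rfl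
    _ ≤ (∑ j, (q ᵥ* w) j * x j) ^ (1 + ρ) := by
        refine rpow_le_rpow (Real.iInf_nonneg fun i => sum_nonneg fun j _ =>
          mul_nonneg (hw i j) (hx j)) ?_ (by linarith)
        rw [← dotProduct, ← dotProduct_mulVec]
        exact ciInf_le_sum_mul_of_mem_stdSimplex _ hq
    _ ≤ gallagerObjective w ρ q :=
        sum_mul_rpow_le_of_mem_stdSimplex (vecMul_nonneg_of_mem_stdSimplex hw hq) hr hρ

theorem exists_isMinOn_gallagerObjective [Nonempty ι] (w : Matrix ι κ ℝ) {ρ : ℝ}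
    (hρ : 0 ≤ 1 + ρ) :
    ∃ q ∈ stdSimplex ℝ ι, IsMinOn (gallagerObjective w ρ) (stdSimplex ℝ ι) q := by
  classical
  refine (isCompact_stdSimplex ℝ ι).exists_isMinOn
    ⟨_, single_mem_stdSimplex ℝ (Classical.arbitrary ι)⟩ (Continuous.continuousOn ?_)
  unfold gallagerObjective
  fun_prop

theorem hasDerivAt_gallagerObjective_add_smul (w : Matrix ι κ ℝ) {ρ : ℝ} (hρ : 0 ≤ ρ)
    (q d : ι → ℝ) :
    HasDerivAt (fun t : ℝ => gallagerObjective w ρ (q + t • d))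
      ((1 + ρ) * ∑ j, (d ᵥ* w) j * (q ᵥ* w) j ^ ρ) 0 := by
  simp only [gallagerObjective, add_vecMul, smul_vecMul, Pi.add_apply, Pi.smul_apply,
    smul_eq_mul, mul_sum]
  refine HasDerivAt.fun_sum fun j _ => ?_
  have h := (((hasDerivAt_id (0 : ℝ)).mul_const ((d ᵥ* w) j)).const_add ((q ᵥ* w) j)).rpow_const
    (p := 1 + ρ) (Or.inr (by linarith))
  refine h.congr_deriv ?_
  simp only [id, zero_mul, add_zero, add_sub_cancel_left]
  ring

theorem gallagerObjective_le_sum_mul_rpow_of_isMinOn {w : Matrix ι κ ℝ} (hw : ∀ i j, 0 ≤ w i j)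
    {ρ : ℝ} (hρ : 0 ≤ ρ) {q : ι → ℝ} (hq : q ∈ stdSimplex ℝ ι)
    (hmin : IsMinOn (gallagerObjective w ρ) (stdSimplex ℝ ι) q) (i : ι) :
    gallagerObjective w ρ q ≤ ∑ j, w i j * (q ᵥ* w) j ^ ρ := by
  classical
  have hline : IsMinOn (fun t : ℝ => gallagerObjective w ρ (q + t • (Pi.single i 1 - q)))
      (Icc 0 1) 0 := fun t ht => by
    simpa using hmin ((convex_stdSimplex ℝ ι).add_smul_sub_mem hq (single_mem_stdSimplex ℝ i) ht)
  have hfermat := (hasDerivAt_gallagerObjective_add_smul w hρ q _).nonneg_of_isMinOn_Icc hline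
  have hsplit : ∑ j, ((Pi.single i 1 - q) ᵥ* w) j * (q ᵥ* w) j ^ ρ
      = ∑ j, w i j * (q ᵥ* w) j ^ ρ - gallagerObjective w ρ q := by
    rw [gallagerObjective, ← sum_sub_distrib]
    refine sum_congr rfl fun j _ => ?_
    rw [sub_vecMul, single_one_vecMul, Pi.sub_apply, row_apply, sub_mul,
      rpow_one_add' (vecMul_nonneg_of_mem_stdSimplex hw hq j) (by linarith)]
  rw [hsplit] at hfermat
  exact sub_nonneg.mp (nonneg_of_mul_nonneg_right hfermat (by linarith))

theorem exists_mem_stdSimplex_le_ckObjective [Nonempty ι] [Nonempty κ] {w : Matrix ι κ ℝ}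
    (hw : ∀ i j, 0 ≤ w i j) {ρ : ℝ} (hρ : 0 ≤ ρ) {q : ι → ℝ} (hq : q ∈ stdSimplex ℝ ι)
    (hmin : IsMinOn (gallagerObjective w ρ) (stdSimplex ℝ ι) q) :
    ∃ r ∈ stdSimplex ℝ κ, gallagerObjective w ρ q ≤ ckObjective w ρ r := by
  classical
  set a := q ᵥ* w
  have ha : ∀ j, 0 ≤ a j := vecMul_nonneg_of_mem_stdSimplex hw hq
  set C := gallagerObjective w ρ q
  have hC : 0 ≤ C := sum_nonneg fun j _ => rpow_nonneg (ha j) (1 + ρ)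
  rcases hC.eq_or_lt with hC0 | hCpos
  · refine ⟨_, single_mem_stdSimplex ℝ (Classical.arbitrary κ), ?_⟩
    rw [← hC0]
    exact rpow_nonneg (Real.iInf_nonneg fun i => sum_nonneg fun j _ =>
      mul_nonneg (hw i j) (rpow_nonneg ((single_mem_stdSimplex ℝ _).1 j) _)) _
  set r : κ → ℝ := fun j => a j ^ (1 + ρ) / C
  have hr : r ∈ stdSimplex ℝ κ :=
    ⟨fun j => div_nonneg (rpow_nonneg (ha j) _) hC, by rw [← sum_div]; exact div_self hCpos.ne'⟩
  have hpow : ∀ j, r j ^ (ρ / (1 + ρ)) = a j ^ ρ / C ^ (ρ / (1 + ρ)) := fun j => by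
    rw [div_rpow (rpow_nonneg (ha j) _) hC, ← rpow_mul (ha j),
      mul_div_cancel₀ _ (by linarith : (1 : ℝ) + ρ ≠ 0)]
  have hrow : ∀ i, C ^ (1 + ρ)⁻¹ ≤ ∑ j, w i j * r j ^ (ρ / (1 + ρ)) := fun i =>
    calc C ^ (1 + ρ)⁻¹ = C / C ^ (ρ / (1 + ρ)) := by
          rw [eq_div_iff (by positivity), ← rpow_add hCpos,
            show (1 + ρ)⁻¹ + ρ / (1 + ρ) = 1 by field_simp, rpow_one]
      _ ≤ (∑ j, w i j * a j ^ ρ) / C ^ (ρ / (1 + ρ)) := by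
          gcongr
          exact gallagerObjective_le_sum_mul_rpow_of_isMinOn hw hρ hq hmin i
      _ = ∑ j, w i j * r j ^ (ρ / (1 + ρ)) := by
          rw [sum_div]
          exact sum_congr rfl fun j _ => by rw [hpow, mul_div_assoc]
  refine ⟨r, hr, ?_⟩
  calc C = (C ^ (1 + ρ)⁻¹) ^ (1 + ρ) := (rpow_inv_rpow hC (by linarith)).symm
    _ ≤ ckObjective w ρ r := rpow_le_rpow (rpow_nonneg hC _) (le_ciInf hrow) (by linarith)

end

theorem gallager_ck_lagrange_duality (N M : ℕ) (hN : 0 < N) (hM : 0 < M)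
    (w : Fin N → Fin M → ℝ) (hw : ∀ i j, 0 ≤ w i j) (ρ : ℝ) (hρ : 0 < ρ) :
    sInf {v : ℝ | ∃ q : Fin N → ℝ, (∀ i, 0 ≤ q i) ∧ (∑ i, q i = 1) ∧
        v = ∑ j, (∑ i, q i * w i j) ^ (1 + ρ)}
      = sSup {v : ℝ | ∃ r : Fin M → ℝ, (∀ j, 0 ≤ r j) ∧ (∑ j, r j = 1) ∧
        v = (⨅ i, ∑ j, w i j * (r j) ^ (ρ / (1 + ρ))) ^ (1 + ρ)} := by
  have : Nonempty (Fin N) := ⟨⟨0, hN⟩⟩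
  have : Nonempty (Fin M) := ⟨⟨0, hM⟩⟩
  obtain ⟨q, hq, hmin⟩ := exists_isMinOn_gallagerObjective w (ρ := ρ) (by linarith)
  obtain ⟨r, hr, hqr⟩ := exists_mem_stdSimplex_le_ckObjective hw hρ.le hq hmin
  rw [IsLeast.csInf_eq (a := gallagerObjective w ρ q), IsGreatest.csSup_eq]
  · refine ⟨⟨r, hr.1, hr.2, ?_⟩, ?_⟩
    · exact le_antisymm hqr (ckObjective_le_gallagerObjective hw hρ hq hr)
    · rintro _ ⟨p, hp0, hp1, rfl⟩
      exact ckObjective_le_gallagerObjective hw hρ hq ⟨hp0, hp1⟩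
  · refine ⟨⟨q, hq.1, hq.2, rfl⟩, ?_⟩
    rintro _ ⟨p, hp0, hp1, rfl⟩
    exact hmin ⟨hp0, hp1⟩
end
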